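/- arXiv:2201.07659 — 2 statements merged into one kernel-verified Lean document; each statement's English description precedes it below -/
import Mathlib

section
/- Let δ : [0,∞) → ℝ and d : [0,∞) → ℝ be such that for every t ≥ 0 the function δ has (one-sided, within [0,∞)) derivative d(t) at t, δ(0) = 1, and δ is log sub-additive, i.e. δ(t+s) ≥ δ(t)·δ(s) for all s, t ≥ 0. Then d(t) ≥ δ(t)·d(0) for every t ≥ 0. (Lemma 2.3, first inequality.) -/
/-! Fix `t ≥ 0`. By log sub-additivity and `δ 0 = 1`, the function
`s ↦ δ (t + s) - δ t * δ s` is nonnegative on `[0, ∞)` and vanishes at `0`, so it attains its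
minimum over `[0, ∞)` at the endpoint `0`. Its right derivative there, `d t - δ t * d 0`, is
therefore nonnegative. -/

open Set

theorem IsLocalMinOn.hasDerivWithinAt_Ici_nonneg {f : ℝ → ℝ} {f' a : ℝ}
    (hmin : IsLocalMinOn f (Ici a) a) (hf : HasDerivWithinAt f f' (Ici a) a) : 0 ≤ f' := by
  have hcone : (1 : ℝ) ∈ posTangentConeAt (Ici a) a :=
    mem_posTangentConeAt_of_segment_subset
      ((segment_subset_Icc (by linarith)).trans Icc_subset_Ici_self)
  simpa using hmin.hasFDerivWithinAt_nonneg hf.hasFDerivWithinAt hcone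

theorem HasDerivWithinAt.comp_const_add_Ici {f : ℝ → ℝ} {f' a : ℝ}
    (hf : HasDerivWithinAt f f' (Ici a) a) :
    HasDerivWithinAt (fun x ↦ f (a + x)) f' (Ici 0) 0 := by
  have hshift : HasDerivWithinAt (fun x : ℝ ↦ a + x) 1 (Ici 0) 0 :=
    ((hasDerivAt_id 0).const_add a).hasDerivWithinAt
  have hf' : HasDerivWithinAt f f' (Ici a) (a + 0) := by rwa [add_zero]
  simpa [Function.comp_def] using hf'.comp 0 hshift fun x (hx : 0 ≤ x) ↦ show a ≤ a + x by linarith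

theorem isMinOn_sub_mul_of_log_subadditive {δ : ℝ → ℝ} (hδ0 : δ 0 = 1)
    (hsub : ∀ s t : ℝ, 0 ≤ s → 0 ≤ t → δ (t + s) ≥ δ t * δ s) {t : ℝ} (ht : 0 ≤ t) :
    IsMinOn (fun s ↦ δ (t + s) - δ t * δ s) (Ici 0) 0 := by
  intro s (hs : 0 ≤ s)
  simp only [add_zero, hδ0, mul_one, sub_self, mem_ofPred_eq, sub_nonneg]
  exact hsub s t hs ht

/-- Lemma 2.3, first inequality: if `δ` has one-sided derivative `d t` within `[0,∞)` at
every `t ≥ 0`, `δ 0 = 1`, and `δ` is log sub-additive, then `d t ≥ δ t * d 0` for `t ≥ 0`. -/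
theorem stmt_0 (δ d : ℝ → ℝ)
    (hderiv : ∀ t : ℝ, 0 ≤ t → HasDerivWithinAt δ (d t) (Set.Ici 0) t)
    (hδ0 : δ 0 = 1)
    (hsub : ∀ s t : ℝ, 0 ≤ s → 0 ≤ t → δ (t + s) ≥ δ t * δ s) :
    ∀ t : ℝ, 0 ≤ t → d t ≥ δ t * d 0 := by
  intro t ht
  have hshifted : HasDerivWithinAt (fun s ↦ δ (t + s)) (d t) (Ici 0) 0 :=
    ((hderiv t ht).mono (Ici_subset_Ici.2 ht)).comp_const_add_Ici
  have hgap : HasDerivWithinAt (fun s ↦ δ (t + s) - δ t * δ s) (d t - δ t * d 0) (Ici 0) 0 :=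
    hshifted.sub ((hderiv 0 le_rfl).const_mul (δ t))
  have := (isMinOn_sub_mul_of_log_subadditive hδ0 hsub ht).localize.hasDerivWithinAt_Ici_nonneg
    hgap
  linarith
end

section
/- Let A < B, r ≥ 0, C ≥ 0, c > 0, and let s : ℝ → ℝ satisfy s(y) ≥ c for all y ∈ (A,B). Let u : ℝ → ℝ be continuous on [A,B], twice differentiable on (A,B) with continuous second derivative there, satisfying (1/2)·s(y)·u''(y) = r·u(y) for all y ∈ (A,B), and |u(A)| ≤ C, |u(B)| ≤ C. Then for every y ∈ (A,B): |u(y)| ≤ C, |u''(y)| ≤ 2rC/c, and |u'(y)| ≤ 2C/(B−A) + (2rC/c)·(B−A); in particular |u'(y)| + |u''(y)| ≤ K·(1+r) for a constant K depending only on C, c, A, B. (Uniform C² estimate, linear in r, established in the proof of Lemma 2.5.) -/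
open Set

/-! Since `r ≥ 0` and `s > 0`, the equation gives `u u'' ≥ 0`, so `(u²)'' = 2(u'² + u u'') ≥ 0`:
`u²` is convex, which is the maximum principle `|u| ≤ C`. The equation then bounds `u''` by
`2rC/c`. By the mean value theorem `u'` takes the value `(u(B) - u(A))/(B - A)`, of size at
most `2C/(B - A)`, somewhere in `(A,B)`, and the bound on `u''` controls how far `u'` can move
away from it. -/

section MaximumPrinciple

variable {a b : ℝ} {u u' u'' : ℝ → ℝ}

theorem convexOn_sq_of_mul_deriv2_nonneg (hu : ContinuousOn u (Icc a b))
    (hu' : ∀ y ∈ Ioo a b, HasDerivAt u (u' y) y)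
    (hu'' : ∀ y ∈ Ioo a b, HasDerivAt u' (u'' y) y)
    (hnonneg : ∀ y ∈ Ioo a b, 0 ≤ u y * u'' y) :
    ConvexOn ℝ (Icc a b) (fun y => u y ^ 2) := by
  refine convexOn_of_hasDerivWithinAt2_nonneg (convex_Icc a b) (hu.pow 2)
    (f' := fun y => 2 * u y * u' y) (f'' := fun y => 2 * (u' y ^ 2 + u y * u'' y))
    ?_ ?_ ?_ <;> rw [interior_Icc] <;> intro y hy
  · exact ((hu' y hy).pow 2).hasDerivWithinAt.congr_deriv (by ring)
  · exact (((hu' y hy).const_mul 2).mul (hu'' y hy)).hasDerivWithinAt.congr_deriv (by ring)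
  · nlinarith [hnonneg y hy, sq_nonneg (u' y)]

theorem abs_le_of_mul_deriv2_nonneg {C : ℝ} (hab : a ≤ b) (hu : ContinuousOn u (Icc a b))
    (hu' : ∀ y ∈ Ioo a b, HasDerivAt u (u' y) y)
    (hu'' : ∀ y ∈ Ioo a b, HasDerivAt u' (u'' y) y)
    (hnonneg : ∀ y ∈ Ioo a b, 0 ≤ u y * u'' y) (ha : |u a| ≤ C) (hb : |u b| ≤ C) :
    ∀ y ∈ Icc a b, |u y| ≤ C := by
  have hC : 0 ≤ C := (abs_nonneg _).trans ha
  have hsq : ∀ {x}, |u x| ≤ C → u x ^ 2 ≤ C ^ 2 := fun h =>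
    sq_le_sq' (neg_le_of_abs_le h) (le_of_abs_le h)
  intro y hy
  refine abs_le_of_sq_le_sq ?_ hC
  calc u y ^ 2 ≤ max (u a ^ 2) (u b ^ 2) :=
        (convexOn_sq_of_mul_deriv2_nonneg hu hu' hu'' hnonneg).le_max_of_mem_Icc
          (left_mem_Icc.mpr hab) (right_mem_Icc.mpr hab) hy
    _ ≤ C ^ 2 := max_le (hsq ha) (hsq hb)

end MaximumPrinciple

section Equation

variable {r c s v w C : ℝ}

theorem mul_nonneg_of_half_mul_eq (hr : 0 ≤ r) (hs : 0 < s) (heq : 1 / 2 * s * v = r * w) :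
    0 ≤ w * v := by
  have h : s * (w * v) = 2 * (r * w ^ 2) := by linear_combination 2 * w * heq
  exact nonneg_of_mul_nonneg_right (h ▸ by positivity) hs

theorem abs_le_of_half_mul_eq (hr : 0 ≤ r) (hc : 0 < c) (hs : c ≤ s)
    (heq : 1 / 2 * s * v = r * w) (hw : |w| ≤ C) : |v| ≤ 2 * r * C / c := by
  have hs0 : 0 < s := hc.trans_le hs
  have hv : v = 2 * r * w / s := by field_simp; linarith
  rw [hv, abs_div, abs_mul, abs_mul, abs_two, abs_of_nonneg hr, abs_of_pos hs0]
  calc 2 * r * |w| / s ≤ 2 * r * C / s := by gcongr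
    _ ≤ 2 * r * C / c := by gcongr; exact mul_nonneg (by positivity) ((abs_nonneg w).trans hw)

end Equation

theorem abs_deriv_le_of_abs_le_of_abs_deriv2_le {a b C M : ℝ} {u u' u'' : ℝ → ℝ}
    (hab : a < b) (hu : ContinuousOn u (Icc a b)) (hu' : ∀ y ∈ Ioo a b, HasDerivAt u (u' y) y)
    (hu'' : ∀ y ∈ Ioo a b, HasDerivAt u' (u'' y) y) (ha : |u a| ≤ C) (hb : |u b| ≤ C)
    (hM : ∀ y ∈ Ioo a b, |u'' y| ≤ M) :
    ∀ y ∈ Ioo a b, |u' y| ≤ 2 * C / (b - a) + M * (b - a) := by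
  have hba : 0 < b - a := sub_pos.mpr hab
  obtain ⟨ξ, hξ, hslope⟩ := exists_hasDerivAt_eq_slope u u' hab hu hu'
  have hξ_bound : |u' ξ| ≤ 2 * C / (b - a) := by
    rw [hslope, abs_div, abs_of_pos hba]
    gcongr
    linarith [abs_sub (u b) (u a)]
  intro y hy
  have hM0 : 0 ≤ M := (abs_nonneg _).trans (hM y hy)
  have hlip : |u' y - u' ξ| ≤ M * |y - ξ| :=
    (convex_Ioo a b).norm_image_sub_le_of_norm_hasDerivWithin_le
      (fun x hx => (hu'' x hx).hasDerivWithinAt) hM hξ hy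
  have hdist : |y - ξ| ≤ b - a :=
    Real.dist_le_of_mem_Icc (Ioo_subset_Icc_self hy) (Ioo_subset_Icc_self hξ)
  calc |u' y| ≤ |u' ξ| + |u' y - u' ξ| := by simpa using abs_add_le (u' ξ) (u' y - u' ξ)
    _ ≤ 2 * C / (b - a) + M * (b - a) := add_le_add hξ_bound (hlip.trans (by gcongr))

theorem stmt_9_general (A B r C c : ℝ) (hAB : A < B) (hr : 0 ≤ r) (hc : 0 < c)
    (s : ℝ → ℝ) (hs : ∀ y ∈ Set.Ioo A B, c ≤ s y)
    (u u' u'' : ℝ → ℝ)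
    (hu_cont : ContinuousOn u (Set.Icc A B))
    (hu' : ∀ y ∈ Set.Ioo A B, HasDerivAt u (u' y) y)
    (hu'' : ∀ y ∈ Set.Ioo A B, HasDerivAt u' (u'' y) y)
    (heq : ∀ y ∈ Set.Ioo A B, (1 / 2) * s y * u'' y = r * u y)
    (hA : |u A| ≤ C) (hB : |u B| ≤ C) :
    (∀ y ∈ Set.Ioo A B,
      |u y| ≤ C ∧ |u'' y| ≤ 2 * r * C / c ∧
      |u' y| ≤ 2 * C / (B - A) + (2 * r * C / c) * (B - A)) ∧
    (∀ y ∈ Set.Ioo A B,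
      |u' y| + |u'' y| ≤ (2 * C / (B - A) + (2 * C / c) * (B - A) + 2 * C / c) * (1 + r)) := by
  have hu_bound : ∀ y ∈ Icc A B, |u y| ≤ C :=
    abs_le_of_mul_deriv2_nonneg hAB.le hu_cont hu' hu'' (fun y hy =>
      mul_nonneg_of_half_mul_eq hr (hc.trans_le (hs y hy)) (heq y hy)) hA hB
  have hu''_bound : ∀ y ∈ Ioo A B, |u'' y| ≤ 2 * r * C / c := fun y hy =>
    abs_le_of_half_mul_eq hr hc (hs y hy) (heq y hy) (hu_bound y (Ioo_subset_Icc_self hy))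
  have hu'_bound :=
    abs_deriv_le_of_abs_le_of_abs_deriv2_le hAB hu_cont hu' hu'' hA hB hu''_bound
  refine ⟨fun y hy => ⟨hu_bound y (Ioo_subset_Icc_self hy), hu''_bound y hy, hu'_bound y hy⟩,
    fun y hy => ?_⟩
  have hC : 0 ≤ C := (abs_nonneg _).trans hA
  have hBA : 0 < B - A := sub_pos.mpr hAB
  have hK₁ : 0 ≤ 2 * C / (B - A) := by positivity
  have hK₂ : 0 ≤ 2 * C / c * (B - A) := by positivity
  have hK₃ : 0 ≤ 2 * C / c := by positivity
  calc |u' y| + |u'' y| ≤ 2 * C / (B - A) + (2 * C / c * (B - A)) * r + 2 * C / c * r := by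
        have h₁ := hu'_bound y hy
        have h₂ := hu''_bound y hy
        rw [show 2 * r * C / c = 2 * C / c * r by ring] at h₁ h₂
        linarith
    _ ≤ (2 * C / (B - A) + (2 * C / c) * (B - A) + 2 * C / c) * (1 + r) := by
        nlinarith [mul_nonneg hK₁ hr]

/-- Uniform C² estimate, linear in `r`, from the proof of Lemma 2.5: for a solution of
`(1/2) s u'' = r u` on `(A,B)` with `s ≥ c > 0` and boundary bounds `|u(A)|,|u(B)| ≤ C`,
one has `|u| ≤ C`, `|u''| ≤ 2rC/c`, `|u'| ≤ 2C/(B-A) + (2rC/c)(B-A)` on `(A,B)`; in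
particular `|u'| + |u''| ≤ K(1+r)` with `K` depending only on `C, c, A, B`. -/
theorem stmt_9 (A B r C c : ℝ) (hAB : A < B) (hr : 0 ≤ r) (hC : 0 ≤ C) (hc : 0 < c)
    (s : ℝ → ℝ) (hs : ∀ y ∈ Set.Ioo A B, c ≤ s y)
    (u u' u'' : ℝ → ℝ)
    (hu_cont : ContinuousOn u (Set.Icc A B))
    (hu' : ∀ y ∈ Set.Ioo A B, HasDerivAt u (u' y) y)
    (hu'' : ∀ y ∈ Set.Ioo A B, HasDerivAt u' (u'' y) y)
    (hu''_cont : ContinuousOn u'' (Set.Ioo A B))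
    (heq : ∀ y ∈ Set.Ioo A B, (1 / 2) * s y * u'' y = r * u y)
    (hA : |u A| ≤ C) (hB : |u B| ≤ C) :
    (∀ y ∈ Set.Ioo A B,
      |u y| ≤ C ∧ |u'' y| ≤ 2 * r * C / c ∧
      |u' y| ≤ 2 * C / (B - A) + (2 * r * C / c) * (B - A)) ∧
    (∀ y ∈ Set.Ioo A B,
      |u' y| + |u'' y| ≤ (2 * C / (B - A) + (2 * C / c) * (B - A) + 2 * C / c) * (1 + r)) :=
  stmt_9_general A B r C c hAB hr hc s hs u u' u'' hu_cont hu' hu'' heq hA hB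
end
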